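/- For all m ≥ 3, the domination number of the 3×m grid graph equals ⌈(3m+1)/4⌉. -/

import Mathlib

/-- The `n × m` grid graph: vertices `[n] × [m]`, with `(i,j)` adjacent to `(k,l)`
iff `|i-k| + |j-l| = 1`. -/
def gridGraph (n m : ℕ) : SimpleGraph (Fin n × Fin m) where
  Adj u v := Nat.dist u.1.val v.1.val + Nat.dist u.2.val v.2.val = 1
  symm := ⟨by intro u v h; simpa [Nat.dist_comm] using h⟩
  loopless := ⟨by intro u h; simp [Nat.dist_self] at h⟩

instance (n m : ℕ) : DecidableRel (gridGraph n m).Adj :=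
  fun _ _ => instDecidableEqNat _ _

/-- Closed neighborhood `N[S]` of a set of vertices. -/
def closedNbhd (n m : ℕ) (S : Finset (Fin n × Fin m)) : Finset (Fin n × Fin m) :=
  S.biUnion fun v => insert v ((gridGraph n m).neighborFinset v)

/-- The loss `ℓ(S) = 5|S| - |N[S]|`. -/
def loss (n m : ℕ) (S : Finset (Fin n × Fin m)) : ℤ :=
  5 * S.card - (closedNbhd n m S).card

/-- `D` is a dominating set: every vertex lies in `N[D]`. -/
def IsDominating (n m : ℕ) (D : Finset (Fin n × Fin m)) : Prop :=
  closedNbhd n m D = Finset.univ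

/-- The domination number `γ(G_{n,m})`. -/
noncomputable def domNumber (n m : ℕ) : ℕ :=
  sInf {k | ∃ D : Finset (Fin n × Fin m), IsDominating n m D ∧ D.card = k}

/-- The minimum loss `ℓ_{n,m}` over dominating sets of `G_{n,m}`. -/
noncomputable def minLoss (n m : ℕ) : ℤ :=
  sInf {l | ∃ D : Finset (Fin n × Fin m), IsDominating n m D ∧ loss n m D = l}

/-!
Upper bound: the centres of the columns `j ≡ 0 (mod 4)` and the top and bottom vertices of the
columns `j ≡ 2 (mod 4)` dominate every vertex except, when `m` is even, some of the last column,
whose centre is then added; this costs three vertices per four columns.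

Lower bound: `γ(G_{3,k+4}) ≥ γ(G_{3,k}) + 3` for `k ≥ 1`, and `γ(G_{3,m}) ≥ m` for `m ≤ 4` by
computation. Let `D` be a minimum dominating set of `G_{3,k+4}` (columns `0, …, k+3`). If at least
three vertices of `D` lie in the last three columns, delete them and fold column `k` onto column
`k-1`; if at least four lie in the last four columns, delete them and add the centre of column
`k-1`. Either way a dominating set of `G_{3,k}` with at most `|D| - 3` vertices remains. One of the
two cases always occurs: two vertices of the last three columns that dominate the last two leave
at least two vertices of column `k+1` to be dominated from column `k`.
-/

open Finset

section Grid

variable {r m n : ℕ}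

theorem mem_closedNbhd {S : Finset (Fin r × Fin m)} {v : Fin r × Fin m} :
    v ∈ closedNbhd r m S ↔ ∃ u ∈ S, Nat.dist u.1 v.1 + Nat.dist u.2 v.2 ≤ 1 := by
  simp only [closedNbhd, mem_biUnion, mem_insert, SimpleGraph.mem_neighborFinset]
  refine exists_congr fun u => and_congr_right fun _ => ?_
  show _ ∨ Nat.dist _ _ + Nat.dist _ _ = 1 ↔ _
  simp only [Prod.ext_iff, Fin.ext_iff, Nat.dist]
  omega

theorem isDominating_iff {D : Finset (Fin r × Fin m)} :
    IsDominating r m D ↔ ∀ v, v ∈ closedNbhd r m D :=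
  eq_univ_iff_forall

instance : DecidablePred (IsDominating r m) :=
  fun D => inferInstanceAs (Decidable (closedNbhd r m D = univ))

theorem domNumber_le {D : Finset (Fin r × Fin m)} (hD : IsDominating r m D) :
    domNumber r m ≤ #D :=
  Nat.sInf_le ⟨D, hD, rfl⟩

theorem exists_isDominating_card_eq_domNumber (r m : ℕ) :
    ∃ D : Finset (Fin r × Fin m), IsDominating r m D ∧ #D = domNumber r m :=
  Nat.sInf_mem (s := {k | ∃ D, IsDominating r m D ∧ #D = k})
    ⟨_, univ, isDominating_iff.2 fun v => mem_closedNbhd.2 ⟨v, mem_univ v, by simp⟩, rfl⟩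

theorem le_domNumber {k : ℕ} (h : ∀ D : Finset (Fin r × Fin m), IsDominating r m D → k ≤ #D) :
    k ≤ domNumber r m := by
  obtain ⟨D, hD, hcard⟩ := exists_isDominating_card_eq_domNumber r m
  exact hcard ▸ h D hD

theorem mem_closedNbhd_filter {S : Finset (Fin r × Fin m)} {v : Fin r × Fin m}
    {p : Fin r × Fin m → Prop} [DecidablePred p] (hv : v ∈ closedNbhd r m S)
    (hp : ∀ u : Fin r × Fin m, Nat.dist u.1 v.1 + Nat.dist u.2 v.2 ≤ 1 → p u) :
    v ∈ closedNbhd r m {u ∈ S | p u} := by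
  obtain ⟨u, hu, huv⟩ := mem_closedNbhd.1 hv
  exact mem_closedNbhd.2 ⟨u, mem_filter.2 ⟨hu, hp u huv⟩, huv⟩

theorem mem_closedNbhd_image_map {f : Fin m → Fin n}
    (hf : ∀ a b, Nat.dist (f a) (f b) ≤ Nat.dist a b) {S : Finset (Fin r × Fin m)}
    {v : Fin r × Fin m} (hv : v ∈ closedNbhd r m S) :
    Prod.map id f v ∈ closedNbhd r n (S.image (Prod.map id f)) := by
  obtain ⟨u, hu, huv⟩ := mem_closedNbhd.1 hv
  exact mem_closedNbhd.2 ⟨_, mem_image_of_mem _ hu, by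
    simpa using (Nat.add_le_add_left (hf u.2 v.2) _).trans huv⟩

theorem closedNbhd_mono {S T : Finset (Fin r × Fin m)} (h : S ⊆ T) :
    closedNbhd r m S ⊆ closedNbhd r m T :=
  biUnion_subset_biUnion_of_subset_left _ h

theorem mem_closedNbhd_image_clamp {D : Finset (Fin r × Fin m)} (hD : IsDominating r m D)
    (hnm : n + 1 ≤ m) {p : Fin r × Fin m → Prop} [DecidablePred p] (v : Fin r × Fin (n + 1))
    (hp : ∀ u : Fin r × Fin m, Nat.dist u.1 v.1 + Nat.dist u.2 v.2 ≤ 1 → p u) :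
    v ∈ closedNbhd r (n + 1)
      ({u ∈ D | p u}.image (Prod.map id fun c : Fin m => Fin.clamp c n)) := by
  have hclamp : ∀ a b : Fin m, Nat.dist (Fin.clamp a n) (Fin.clamp b n) ≤ Nat.dist a b := by
    intro a b
    simp only [Fin.clamp, Nat.dist]
    omega
  have hv := mem_closedNbhd_filter (isDominating_iff.1 hD (v.1, Fin.castLE hnm v.2)) hp
  convert mem_closedNbhd_image_map hclamp hv
  ext <;> simp [Fin.clamp, Nat.le_of_lt_succ v.2.isLt]

theorem domNumber_succ_le_card_filter_le {D : Finset (Fin r × Fin m)} (hD : IsDominating r m D)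
    (hnm : n + 1 < m) : domNumber r (n + 1) ≤ #{v ∈ D | v.2.val ≤ n + 1} := by
  have hdom : IsDominating r (n + 1)
      ({v ∈ D | v.2.val ≤ n + 1}.image (Prod.map id fun c : Fin m => Fin.clamp c n)) := by
    refine isDominating_iff.2 fun v => mem_closedNbhd_image_clamp hD hnm.le v fun u hu => ?_
    have := v.2.isLt
    simp only [Nat.dist] at hu
    omega
  exact (domNumber_le hdom).trans card_image_le

theorem domNumber_succ_le_card_filter_le_add_one {D : Finset (Fin 3 × Fin m)}
    (hD : IsDominating 3 m D) (hnm : n + 1 ≤ m) :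
    domNumber 3 (n + 1) ≤ #{v ∈ D | v.2.val ≤ n} + 1 := by
  set D' := {v ∈ D | v.2.val ≤ n}.image (Prod.map id fun c : Fin m => Fin.clamp c n)
  refine (domNumber_le (D := D' ∪ {(1, Fin.last n)}) (isDominating_iff.2 fun v => ?_)).trans
    ((card_union_le _ _).trans (Nat.add_le_add card_image_le le_rfl))
  by_cases hlast : v.2 = Fin.last n
  · refine mem_closedNbhd.2 ⟨(1, Fin.last n), mem_union_right _ (mem_singleton_self _), ?_⟩
    have := v.1.isLt
    simp only [hlast, Fin.val_last, Nat.dist, Fin.isValue, Fin.val_one, Nat.sub_self]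
    omega
  · refine closedNbhd_mono subset_union_left
      (mem_closedNbhd_image_clamp hD hnm v fun u hu => ?_)
    have := Fin.val_lt_last hlast
    simp only [Nat.dist] at hu
    omega

end Grid

set_option maxRecDepth 100000 in
theorem three_le_card_or_four_le_card_add_card_compl_closedNbhd :
    ∀ T : Finset (Fin 3 × Fin 3),
      ({w | 1 ≤ w.2.val} : Finset (Fin 3 × Fin 3)) ⊆ closedNbhd 3 3 T →
        3 ≤ #T ∨ 4 ≤ #T + #(closedNbhd 3 3 T)ᶜ := by
  decide +kernel

theorem three_le_card_or_four_le_card_of_last_four_columns {k : ℕ}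
    {D : Finset (Fin 3 × Fin (k + 4))} (hD : IsDominating 3 (k + 4) D) :
    3 ≤ #{v ∈ D | k < v.2.val} ∨ 4 ≤ #{v ∈ D | k ≤ v.2.val} := by
  set T := {v ∈ D | k < v.2.val}
  let g : Fin (k + 4) → Fin 3 := fun c => ⟨c - (k + 1), by omega⟩
  have hg : ∀ a b, Nat.dist (g a) (g b) ≤ Nat.dist a b := by
    intro a b
    simp only [g, Nat.dist]
    omega
  set T' := T.image (Prod.map id g)
  have hlift : ∀ w : Fin 3 × Fin 3,
      (w.1, (⟨w.2 + (k + 1), by omega⟩ : Fin (k + 4))) ∈ closedNbhd 3 (k + 4) T →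
        w ∈ closedNbhd 3 3 T' := by
    intro w hw
    convert mem_closedNbhd_image_map hg hw
    ext <;> simp [g]
  have hright : ({w | 1 ≤ w.2.val} : Finset (Fin 3 × Fin 3)) ⊆ closedNbhd 3 3 T' := by
    intro w hw
    refine hlift w <| mem_closedNbhd_filter (isDominating_iff.1 hD _) fun u hu => ?_
    simp only [mem_filter, mem_univ, true_and] at hw
    simp only [Nat.dist] at hu
    omega
  have hcompl : #(closedNbhd 3 3 T')ᶜ ≤ #{v ∈ D | v.2.val = k} := by
    have hcol : ∀ w ∈ (closedNbhd 3 3 T')ᶜ, w.2.val = 0 := by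
      intro w hw
      by_contra h
      exact mem_compl.1 hw (hright (by simp only [mem_filter, mem_univ, true_and]; omega))
    refine card_le_card_of_injOn (fun w => (w.1, ⟨k, by omega⟩)) (fun w hw => ?_) ?_
    · obtain ⟨u, hu, huw⟩ :=
        mem_closedNbhd.1 (isDominating_iff.1 hD (w.1, ⟨w.2 + (k + 1), by omega⟩))
      have hu₂ : ¬k < u.2.val := fun hlt =>
        mem_compl.1 hw (hlift w (mem_closedNbhd.2 ⟨u, mem_filter.2 ⟨hu, hlt⟩, huw⟩))
      have hw₂ := hcol w hw
      have : u = (w.1, ⟨k, by omega⟩) := by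
        simp only [Nat.dist] at huw
        ext <;> simp <;> omega
      simpa [this] using hu
    · intro w₁ hw₁ w₂ hw₂ h
      have := hcol w₁ hw₁
      have := hcol w₂ hw₂
      exact Prod.ext (congrArg Prod.fst h :) (Fin.ext (by omega))
  have hsplit : #{v ∈ D | k ≤ v.2.val} = #T + #{v ∈ D | v.2.val = k} := by
    rw [← card_union_of_disjoint (disjoint_filter.2 fun _ _ h₁ h₂ => by omega), ← filter_or]
    congr 1
    exact filter_congr fun _ _ => by omega
  have hT' : #T' ≤ #T := card_image_le
  rcases three_le_card_or_four_le_card_add_card_compl_closedNbhd T' hright with h | h <;> omega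

theorem card_filter_le_add_card_filter_lt {α : Type*} (s : Finset α) (f : α → ℕ) (k : ℕ) :
    #{a ∈ s | f a ≤ k} + #{a ∈ s | k < f a} = #s := by
  simpa only [not_le] using card_filter_add_card_filter_not (s := s) (fun a => f a ≤ k)

theorem domNumber_three_add_three_le (n : ℕ) :
    domNumber 3 (n + 1) + 3 ≤ domNumber 3 (n + 5) := by
  obtain ⟨D, hD, hcard⟩ := exists_isDominating_card_eq_domNumber 3 (n + 5)
  have hblock : 3 ≤ #{v ∈ D | n + 1 < v.2.val} ∨ 4 ≤ #{v ∈ D | n < v.2.val} :=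
    three_le_card_or_four_le_card_of_last_four_columns (k := n + 1) hD
  have := card_filter_le_add_card_filter_lt D (fun v => v.2.val) (n + 1)
  have := card_filter_le_add_card_filter_lt D (fun v => v.2.val) n
  rcases hblock with h | h
  · have := domNumber_succ_le_card_filter_le hD (n := n) (by omega)
    omega
  · have := domNumber_succ_le_card_filter_le_add_one hD (n := n) (by omega)
    omega

set_option maxRecDepth 100000 in
theorem le_domNumber_three_of_le_four {m : ℕ} (hm : m ≤ 4) : m ≤ domNumber 3 m := by
  interval_cases m <;> exact le_domNumber (by decide +kernel)

theorem le_domNumber_three {m : ℕ} (hm : 1 ≤ m) : (3 * m + 4) / 4 ≤ domNumber 3 m := by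
  induction m using Nat.strong_induction_on with
  | _ m ih =>
    by_cases hm4 : m ≤ 4
    · have := le_domNumber_three_of_le_four hm4
      omega
    · obtain ⟨n, rfl⟩ : ∃ n, m = n + 5 := ⟨m - 5, by omega⟩
      have := ih (n + 1) (by omega) (by omega)
      have := domNumber_three_add_three_le n
      omega

def rowResidue (m i a : ℕ) : Finset (Fin 3 × Fin m) :=
  {v | v.1.val = i ∧ v.2.val % 4 = a}

def oddLastCentre (m : ℕ) : Finset (Fin 3 × Fin m) :=
  {v | v.1.val = 1 ∧ v.2.val % 2 = 1 ∧ v.2.val + 1 = m}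

def domSetThree (m : ℕ) : Finset (Fin 3 × Fin m) :=
  rowResidue m 1 0 ∪ rowResidue m 0 2 ∪ rowResidue m 2 2 ∪ oddLastCentre m

theorem isDominating_domSetThree (m : ℕ) : IsDominating 3 m (domSetThree m) := by
  refine isDominating_iff.2 fun v => ?_
  have hv₁ := v.1.isLt
  have hv₂ := v.2.isLt
  have dominated_by : ∀ (i j : ℕ) (hi : i < 3) (hj : j < m),
      (i = 1 ∧ j % 4 = 0 ∨ i = 0 ∧ j % 4 = 2 ∨ i = 2 ∧ j % 4 = 2 ∨
        i = 1 ∧ j % 2 = 1 ∧ j + 1 = m) →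
      i - v.1 + (v.1 - i) + (j - v.2 + (v.2 - j)) ≤ 1 → v ∈ closedNbhd 3 m (domSetThree m) := by
    intro i j hi hj hij hd
    refine mem_closedNbhd.2 ⟨(⟨i, hi⟩, ⟨j, hj⟩), ?_, hd⟩
    simp only [domSetThree, rowResidue, oddLastCentre, mem_union, mem_filter, mem_univ, true_and]
    omega
  obtain h | h | h | h :
      v.2.val % 4 = 0 ∨ v.2.val % 4 = 1 ∨ v.2.val % 4 = 2 ∨ v.2.val % 4 = 3 := by
    omega
  · exact dominated_by 1 v.2 (by omega) hv₂ (by omega) (by omega)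
  · by_cases hi : v.1.val = 1
    · exact dominated_by 1 (v.2 - 1) (by omega) (by omega) (by omega) (by omega)
    by_cases hlast : v.2.val + 1 = m
    · exact dominated_by 1 v.2 (by omega) hv₂ (by omega) (by omega)
    · exact dominated_by v.1 (v.2 + 1) hv₁ (by omega) (by omega) (by omega)
  · by_cases hi : v.1.val = 1
    · exact dominated_by 0 v.2 (by omega) hv₂ (by omega) (by omega)
    · exact dominated_by v.1 v.2 hv₁ hv₂ (by omega) (by omega)
  · by_cases hi : v.1.val = 1
    · by_cases hlast : v.2.val + 1 = m
      · exact dominated_by 1 v.2 (by omega) hv₂ (by omega) (by omega)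
      · exact dominated_by 1 (v.2 + 1) (by omega) (by omega) (by omega) (by omega)
    · exact dominated_by v.1 (v.2 - 1) hv₁ (by omega) (by omega) (by omega)

theorem card_rowResidue_le (m i a : ℕ) : #(rowResidue m i a) ≤ (m + 3 - a) / 4 := by
  refine (card_le_card_of_injOn (t := range ((m + 3 - a) / 4)) (fun v => v.2.val / 4)
    (fun v hv => ?_) (fun v hv w hw h => ?_)).trans (card_range _).le
  · simp only [rowResidue, coe_filter, mem_univ, true_and, Set.mem_ofPred_eq] at hv
    simp only [coe_range, Set.mem_Iio]
    omega
  · simp only [rowResidue, coe_filter, mem_univ, true_and, Set.mem_ofPred_eq] at hv hw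
    have : v.2.val / 4 = w.2.val / 4 := h
    exact Prod.ext (Fin.ext (by omega)) (Fin.ext (by omega))

theorem card_oddLastCentre_le (m : ℕ) : #(oddLastCentre m) ≤ (m + 1) % 2 := by
  refine (card_le_card_of_injOn (t := range ((m + 1) % 2)) (fun _ => 0)
    (fun v hv => ?_) (fun v hv w hw _ => ?_)).trans (card_range _).le
  · simp only [oddLastCentre, coe_filter, mem_univ, true_and, Set.mem_ofPred_eq] at hv
    simp only [coe_range, Set.mem_Iio]
    omega
  · simp only [oddLastCentre, coe_filter, mem_univ, true_and, Set.mem_ofPred_eq] at hv hw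
    exact Prod.ext (Fin.ext (by omega)) (Fin.ext (by omega))

theorem domNumber_three_le (m : ℕ) : domNumber 3 m ≤ (3 * m + 4) / 4 := by
  refine (domNumber_le (isDominating_domSetThree m)).trans ?_
  have := card_rowResidue_le m 1 0
  have := card_rowResidue_le m 0 2
  have := card_rowResidue_le m 2 2
  have := card_oddLastCentre_le m
  have := card_union_le (rowResidue m 1 0 ∪ rowResidue m 0 2 ∪ rowResidue m 2 2) (oddLastCentre m)
  have := card_union_le (rowResidue m 1 0 ∪ rowResidue m 0 2) (rowResidue m 2 2)
  have := card_union_le (rowResidue m 1 0) (rowResidue m 0 2)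
  unfold domSetThree
  omega

theorem stmt_10 (m : ℕ) (hm : 3 ≤ m) : domNumber 3 m = (3 * m + 4) / 4 :=
  le_antisymm (domNumber_three_le m) (le_domNumber_three (by omega))
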